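/- Set λ = 3/2. There exists a sequence of real polynomials (p_k)_{k ≥ 1} such that: p_1(X) = X; for every k ≥ 2, p_k has degree exactly k, constant term p_k(0) = 0, value p_k(1) = 1, positive leading coefficient, and satisfies the functional equation p_k(λx) − λ·p_k(x) = (λ − 1) · Σ_{j=1}^{k−1} C(k,j)·p_j(x)·p_{k−j}(x) for all x ∈ ℝ; and for every n ≥ 0 and k ≥ 1, the k-th moment of the number of cycles over the uniform distribution on the nonsimple binary butterfly permutations B_{2^n} satisfies (1/2^{2^n − 1}) · Σ_{σ ∈ B_{2^n}} C(σ)^k = p_k((3/2)^n). -/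

import Mathlib

/-- Kronecker product of permutations: `(i, r) ↦ (σ i, π r)` under the
row-major identification `Fin (a * b) ≃ Fin a × Fin b`. -/
def permKron {a b : ℕ} (σ : Equiv.Perm (Fin a)) (π : Equiv.Perm (Fin b)) :
    Equiv.Perm (Fin (a * b)) :=
  finProdFinEquiv.symm.trans ((Equiv.prodCongr σ π).trans finProdFinEquiv)

/-- Direct (block) sum of permutations: `(i, r) ↦ (i, π i r)`. -/
def permBlockSum {a b : ℕ} (π : Fin a → Equiv.Perm (Fin b)) :
    Equiv.Perm (Fin (a * b)) :=
  finProdFinEquiv.symm.trans ((Equiv.prodCongrRight π).trans finProdFinEquiv)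

/-- The simple `m`-nary butterfly permutations of `Fin (m ^ n)`:
Kronecker products `τ^{a₁} ⊗ ⋯ ⊗ τ^{aₙ}` of powers of the standard `m`-cycle `τ = finRotate m`. -/
def simpleButterfly (m : ℕ) : (n : ℕ) → Set (Equiv.Perm (Fin (m ^ n)))
  | 0 => {1}
  | n + 1 =>
    {σ | ∃ (a : ℤ) (π : Equiv.Perm (Fin (m ^ n))), π ∈ simpleButterfly m n ∧
      σ = (finCongr (pow_succ' m n).symm).permCongr (permKron (finRotate m ^ a) π)}

/-- The nonsimple `m`-nary butterfly permutations of `Fin (m ^ n)`: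
`B₀ = {1}`, `B_{n+1} = {(τ^a ⊗ id) ∘ (σ₁ ⊕ ⋯ ⊕ σ_m) : σᵢ ∈ B_n}`. -/
def nonsimpleButterfly (m : ℕ) : (n : ℕ) → Set (Equiv.Perm (Fin (m ^ n)))
  | 0 => {1}
  | n + 1 =>
    {σ | ∃ (a : ℤ) (π : Fin m → Equiv.Perm (Fin (m ^ n))),
      (∀ i, π i ∈ nonsimpleButterfly m n) ∧
      σ = (finCongr (pow_succ' m n).symm).permCongr
        (permKron (finRotate m ^ a) 1 * permBlockSum π)}

/-- The length of the longest increasing subsequence of a permutation. -/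
noncomputable def LIS {M : ℕ} (σ : Equiv.Perm (Fin M)) : ℕ :=
  sSup {k | ∃ t : Finset (Fin M), t.card = k ∧ StrictMonoOn (⇑σ) ↑t}

/-- The length of the longest decreasing subsequence of a permutation. -/
noncomputable def LDS {M : ℕ} (σ : Equiv.Perm (Fin M)) : ℕ :=
  sSup {k | ∃ t : Finset (Fin M), t.card = k ∧ StrictAntiOn (⇑σ) ↑t}

/-- The number of cycles in the disjoint cycle decomposition of `σ`,
counting fixed points as cycles of length 1. -/
def numCycles {M : ℕ} (σ : Equiv.Perm (Fin M)) : ℕ :=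
  Multiset.card σ.cycleType + (Finset.univ.filter fun x => σ x = x).card

/-- The number of fixed points of `σ`. -/
def numFixed {M : ℕ} (σ : Equiv.Perm (Fin M)) : ℕ :=
  (Finset.univ.filter fun x => σ x = x).card

/-!
Every element of `B_{n+1}` is `(w ⊗ id) ∘ (π₀ ⊕ π₁)` for a unique `w ∈ S₂` and `π₀, π₁ ∈ B_n`.
For `w = id` the cycles are those of `π₀` together with those of `π₁`; for `w` the swap they
correspond to the cycles of `π₁ π₀`. As `B_n` is closed under multiplication, `π₁ π₀` runs over
`B_n` once for every `π₀`, so the power sums `M_n(k) = ∑_{σ ∈ B_n} C(σ)^k` satisfy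
`M_{n+1}(k) = ∑_{j ≤ k} C(k,j) M_n(j) M_n(k-j) + M_n(0) M_n(k)`. Since `M_n(0) = |B_n|`, this is the
functional equation `2 p_k(3x/2) = p_k(x) + ∑_{j ≤ k} C(k,j) p_j(x) p_{k-j}(x)` at `x = (3/2)^n`.
That equation is solved degree by degree: `p ↦ p(λX) - λp` multiplies the coefficient of `X^d`
by `λ^d - λ`, which vanishes only for `d = 1`, and the free linear coefficient is fixed by
`p_k(1) = 1`.
-/

theorem Finset.sum_comp_mul_right_of_mul_mem {G M : Type*} [Mul G] [IsRightCancelMul G]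
    [AddCommMonoid M] {s : Finset G} (hs : ∀ a ∈ s, ∀ b ∈ s, a * b ∈ s) {p : G} (hp : p ∈ s)
    (g : G → M) : ∑ q ∈ s, g (q * p) = ∑ q ∈ s, g q := by
  classical
  have himage : s.image (· * p) = s :=
    Finset.eq_of_subset_of_card_le (Finset.image_subset_iff.2 fun q hq => hs q hq p hp)
      (Finset.card_image_of_injective s (mul_left_injective p)).ge
  calc ∑ q ∈ s, g (q * p) = ∑ q ∈ s.image (· * p), g q :=
        (Finset.sum_image fun _ _ _ _ h => mul_right_cancel h).symm
    _ = ∑ q ∈ s, g q := by rw [himage]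

theorem Finset.sum_sum_add_pow {ι κ R : Type*} [CommSemiring R] (s : Finset ι) (t : Finset κ)
    (u : ι → R) (v : κ → R) (k : ℕ) :
    ∑ p ∈ s, ∑ q ∈ t, (u p + v q) ^ k =
      ∑ j ∈ Finset.range (k + 1),
        (k.choose j : R) * (∑ p ∈ s, u p ^ j) * ∑ q ∈ t, v q ^ (k - j) := by
  simp_rw [add_pow, mul_assoc, Finset.sum_mul_sum, Finset.mul_sum]
  rw [Finset.sum_comm (s := Finset.range (k + 1))]
  refine Finset.sum_congr rfl fun p _ => ?_
  rw [Finset.sum_comm (s := Finset.range (k + 1))]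
  exact Finset.sum_congr rfl fun q _ => Finset.sum_congr rfl fun j _ => by ring

namespace Equiv.Perm

variable {α β ι : Type*}

theorem SameCycle.map_of_forall_sameCycle {σ : Perm α} {τ : Perm β} {f : α → β}
    (hf : ∀ x, τ.SameCycle (f x) (f (σ x))) {x y : α} (h : σ.SameCycle x y) :
    τ.SameCycle (f x) (f y) := by
  obtain ⟨k, rfl⟩ := h
  induction k using Int.induction_on with
  | zero => exact SameCycle.refl _ _
  | succ k ih =>
    rw [add_comm, zpow_one_add, mul_apply]
    exact ih.trans (hf _)
  | pred k ih =>
    have h := hf ((σ ^ (-(k : ℤ) - 1)) x)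
    rw [← mul_apply, ← zpow_one_add, add_sub_cancel] at h
    exact ih.trans h.symm

theorem SameCycle.map_of_semiconj {σ : Perm α} {τ : Perm β} {f : α → β}
    (hf : ∀ x, f (σ x) = τ (f x)) {x y : α} (h : σ.SameCycle x y) :
    τ.SameCycle (f x) (f y) :=
  h.map_of_forall_sameCycle fun x => ⟨1, by rw [zpow_one, hf]⟩

noncomputable def cycleCount (σ : Perm α) : ℕ := Nat.card (Quotient (SameCycle.setoid σ))

theorem cycleCount_permCongr (e : α ≃ β) (σ : Perm α) :
    cycleCount (e.permCongr σ) = cycleCount σ := by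
  refine Nat.card_congr (Quotient.congr e fun x y => ?_).symm
  show σ.SameCycle x y ↔ (e.permCongr σ).SameCycle (e x) (e y)
  exact ⟨fun h => h.map_of_semiconj (by simp),
    fun h => by simpa using h.map_of_semiconj (f := e.symm) (by simp)⟩

theorem cycleCount_prodCongrRight [Fintype ι] [Finite β] (π : ι → Perm β) :
    cycleCount (prodCongrRight π) = ∑ i, cycleCount (π i) := by
  let toSigma : ι × β → Σ i, Quotient (SameCycle.setoid (π i)) := fun p => ⟨p.1, ⟦p.2⟧⟩
  have toSigma_sameCycle : ∀ p q, SameCycle (prodCongrRight π) p q → toSigma p = toSigma q :=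
    fun p q h => by
      simpa using h.map_of_forall_sameCycle (τ := 1) (f := toSigma) fun ⟨i, r⟩ => by
        simpa [toSigma] using Quotient.sound (s := SameCycle.setoid (π i)) ⟨1, rfl⟩
  let e : Quotient (SameCycle.setoid (prodCongrRight π)) ≃
      Σ i, Quotient (SameCycle.setoid (π i)) :=
    { toFun := Quotient.lift toSigma toSigma_sameCycle
      invFun := fun q => Quotient.map (fun r => (q.1, r))
        (fun _ _ (h : (π q.1).SameCycle _ _) => h.map_of_semiconj (by simp)) q.2
      left_inv := by rintro ⟨p⟩; rfl
      right_inv := by rintro ⟨i, ⟨r⟩⟩; rfl }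
  rw [cycleCount, Nat.card_congr e, Nat.card_sigma]
  rfl

theorem card_cycleType_add_card_fixed_eq_cycleCount [Fintype α] [DecidableEq α] (σ : Perm α) :
    Multiset.card σ.cycleType + (Finset.univ.filter fun x => σ x = x).card = cycleCount σ := by
  let f : α → σ.cycleFactorsFinset ⊕ {x // σ x = x} := fun x =>
    if h : σ x = x then .inr ⟨x, h⟩
    else .inl ⟨σ.cycleOf x, cycleOf_mem_cycleFactorsFinset_iff.2 (mem_support.2 h)⟩
  have hf : ∀ x y, σ.SameCycle x y ↔ f x = f y := by
    intro x y
    by_cases hx : σ x = x <;> by_cases hy : σ y = y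
    · simpa [f, hx, hy] using ⟨fun h => h.eq_of_left hx, fun h => h ▸ SameCycle.refl σ x⟩
    · simpa [f, hx, hy] using fun h => hy ((SameCycle.apply_eq_self_iff h).1 hx)
    · simpa [f, hx, hy] using fun h => hx ((SameCycle.apply_eq_self_iff h).2 hy)
    · simpa [f, hx, hy] using sameCycle_iff_cycleOf_eq_of_mem_support
        (mem_support.2 hx) (mem_support.2 hy)
  have hsurj : Function.Surjective f := by
    rintro (⟨c, hc⟩ | ⟨x, hx⟩)
    · obtain ⟨x, hx⟩ := (mem_cycleFactorsFinset_iff.1 hc).1.nonempty_support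
      have hxσ : σ x ≠ x := mem_support.1 (mem_cycleFactorsFinset_support_le hc hx)
      exact ⟨x, by simp [f, hxσ, cycle_is_cycleOf hx hc]⟩
    · exact ⟨x, by simp [f, hx]⟩
  have hker : SameCycle.setoid σ = Setoid.ker f := Setoid.ext hf
  rw [cycleCount, hker, Nat.card_congr (Setoid.quotientKerEquivOfSurjective f hsurj),
    Nat.card_sum, cycleType_def, Multiset.card_map]
  simp [Nat.card_eq_fintype_card, Fintype.card_subtype]

/-- Following `(i, r) ↦ (i + 1, π i r)` twice from the block `0` applies `π 1 * π 0`, and every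
point of block `1` is one step away from block `0`. -/
theorem cycleCount_prodCongr_finRotate_two_mul (π : Fin 2 → Perm β) :
    cycleCount (prodCongr (finRotate 2) 1 * prodCongrRight π) = cycleCount (π 1 * π 0) := by
  set σ : Perm (Fin 2 × β) := prodCongr (finRotate 2) 1 * prodCongrRight π
  have hσ : ∀ i r, σ (i, r) = (finRotate 2 i, π i r) := fun i r => rfl
  have hrot : finRotate 2 0 = 1 ∧ finRotate 2 1 = 0 := by decide
  let glue : Fin 2 × β → β := fun p => if p.1 = 0 then p.2 else π 1 p.2
  have glue_sameCycle : ∀ p, σ.SameCycle (0, glue p) p := by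
    rintro ⟨i, r⟩
    fin_cases i
    · exact SameCycle.refl _ _
    · exact SameCycle.symm ⟨1, by simp [glue, hσ, hrot.2]⟩
  let e : Quotient (SameCycle.setoid σ) ≃ Quotient (SameCycle.setoid (π 1 * π 0)) :=
    { toFun := Quotient.map glue fun p q (h : σ.SameCycle p q) =>
        h.map_of_forall_sameCycle fun ⟨i, r⟩ => by
          fin_cases i
          · exact ⟨1, by simp [glue, hσ, hrot.1]⟩
          · simpa [glue, hσ, hrot.2] using SameCycle.refl _ _
      invFun := Quotient.map (fun r => ((0 : Fin 2), r)) fun r s (h : (π 1 * π 0).SameCycle r s) =>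
        h.map_of_forall_sameCycle fun t => ⟨2, by simp [pow_two, hσ, hrot.1, hrot.2]⟩
      left_inv := by rintro ⟨p⟩; exact Quotient.sound (glue_sameCycle p)
      right_inv := by rintro ⟨r⟩; rfl }
  exact Nat.card_congr e

end Equiv.Perm

theorem numCycles_eq_cycleCount {M : ℕ} (σ : Equiv.Perm (Fin M)) :
    numCycles σ = σ.cycleCount :=
  σ.card_cycleType_add_card_fixed_eq_cycleCount

open Equiv Equiv.Perm

/-- `(w ⊗ id) ∘ (π 0 ⊕ ⋯ ⊕ π (m - 1))` in the notation of `nonsimpleButterfly`. -/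
def butterflyStep (m n : ℕ) (w : Perm (Fin m)) (π : Fin m → Perm (Fin (m ^ n))) :
    Perm (Fin (m ^ (n + 1))) :=
  (finProdFinEquiv.trans (finCongr (pow_succ' m n).symm)).permCongr
    (prodCongr w 1 * prodCongrRight π)

theorem mem_nonsimpleButterfly_succ {m n : ℕ} {σ : Perm (Fin (m ^ (n + 1)))} :
    σ ∈ nonsimpleButterfly m (n + 1) ↔ ∃ (a : ℤ) (π : Fin m → Perm (Fin (m ^ n))),
      (∀ i, π i ∈ nonsimpleButterfly m n) ∧ σ = butterflyStep m n (finRotate m ^ a) π := by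
  have : ∀ (w : Perm (Fin m)) (π : Fin m → Perm (Fin (m ^ n))),
      (finCongr (pow_succ' m n).symm).permCongr (permKron w 1 * permBlockSum π) =
        butterflyStep m n w π := fun _ _ => by
    ext; simp [butterflyStep, permKron, permBlockSum, mul_apply]
  simp only [nonsimpleButterfly, Set.mem_ofPred_eq, this]

theorem butterflyStep_mul {m n : ℕ} (w w' : Perm (Fin m)) (π π' : Fin m → Perm (Fin (m ^ n))) :
    butterflyStep m n w π * butterflyStep m n w' π' =
      butterflyStep m n (w * w') (fun i => π (w' i) * π' i) := by
  rw [butterflyStep, butterflyStep, butterflyStep, ← permCongr_mul]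
  congr 1
  ext ⟨i, r⟩ <;> simp [mul_apply]

theorem mul_mem_nonsimpleButterfly {m : ℕ} : ∀ {n : ℕ} {σ τ : Perm (Fin (m ^ n))},
    σ ∈ nonsimpleButterfly m n → τ ∈ nonsimpleButterfly m n →
      σ * τ ∈ nonsimpleButterfly m n
  | 0, σ, τ, (hσ : σ = 1), (hτ : τ = 1) => by rw [hσ, hτ, one_mul]; rfl
  | n + 1, σ, τ, hσ, hτ => by
    obtain ⟨a, π, hπ, rfl⟩ := mem_nonsimpleButterfly_succ.1 hσ
    obtain ⟨b, π', hπ', rfl⟩ := mem_nonsimpleButterfly_succ.1 hτ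
    rw [butterflyStep_mul, ← zpow_add]
    exact mem_nonsimpleButterfly_succ.2
      ⟨a + b, _, fun i => mul_mem_nonsimpleButterfly (hπ _) (hπ' i), rfl⟩

theorem numCycles_butterflyStep_one {m n : ℕ} (π : Fin m → Perm (Fin (m ^ n))) :
    numCycles (butterflyStep m n 1 π) = ∑ i, numCycles (π i) := by
  have h1 : prodCongr (1 : Perm (Fin m)) (1 : Perm (Fin (m ^ n))) = 1 := rfl
  simp only [numCycles_eq_cycleCount, butterflyStep, cycleCount_permCongr, h1, one_mul,
    cycleCount_prodCongrRight]

theorem numCycles_butterflyStep_finRotate_two {n : ℕ} (π : Fin 2 → Perm (Fin (2 ^ n))) :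
    numCycles (butterflyStep 2 n (finRotate 2) π) = numCycles (π 1 * π 0) := by
  rw [numCycles_eq_cycleCount, numCycles_eq_cycleCount, butterflyStep, cycleCount_permCongr,
    cycleCount_prodCongr_finRotate_two_mul]

theorem butterflyStep_injective2 (m n : ℕ) : Function.Injective2 (butterflyStep m n) := by
  intro w w' π π' h
  have happ : ∀ i r, (w i, π i r) = (w' i, π' i r) := fun i r => by
    simpa [mul_apply] using congrArg (· (i, r)) ((permCongr _).injective h)
  refine ⟨Equiv.ext fun i => (Prod.ext_iff.1 (happ i ⟨0, pow_pos i.pos n⟩)).1,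
    funext fun i => Equiv.ext fun r => (Prod.ext_iff.1 (happ i r)).2⟩

noncomputable def butterflyFinset (m n : ℕ) : Finset (Perm (Fin (m ^ n))) :=
  (Set.toFinite (nonsimpleButterfly m n)).toFinset

theorem mem_butterflyFinset {m n : ℕ} {σ : Perm (Fin (m ^ n))} :
    σ ∈ butterflyFinset m n ↔ σ ∈ nonsimpleButterfly m n :=
  Set.Finite.mem_toFinset _

theorem butterflyFinset_zero (m : ℕ) : butterflyFinset m 0 = {1} := by
  ext σ
  rw [mem_butterflyFinset, Finset.mem_singleton]
  rfl

theorem butterflyFinset_two_succ (n : ℕ) :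
    butterflyFinset 2 (n + 1) = ((butterflyFinset 2 n ×ˢ butterflyFinset 2 n) ×ˢ Finset.univ).image
      fun x => butterflyStep 2 n x.2 ![x.1.1, x.1.2] := by
  have hrot : ∀ w : Perm (Fin 2), ∃ a : ℤ, finRotate 2 ^ a = w := by
    have : ∀ w : Perm (Fin 2), w = finRotate 2 ^ (0 : ℤ) ∨ w = finRotate 2 ^ (1 : ℤ) := by decide
    exact fun w => (this w).elim (⟨0, ·.symm⟩) (⟨1, ·.symm⟩)
  ext σ
  simp only [mem_butterflyFinset, mem_nonsimpleButterfly_succ, Finset.mem_image,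
    Finset.mem_product, Finset.mem_univ, and_true, Prod.exists, Fin.forall_fin_two]
  constructor
  · rintro ⟨a, π, ⟨h0, h1⟩, rfl⟩
    exact ⟨π 0, π 1, _, ⟨h0, h1⟩, by congr; ext i; fin_cases i <;> rfl⟩
  · rintro ⟨p, q, w, ⟨hp, hq⟩, rfl⟩
    obtain ⟨a, rfl⟩ := hrot w
    exact ⟨a, _, ⟨hp, hq⟩, rfl⟩

theorem sum_butterflyFinset_two_succ {M : Type*} [AddCommMonoid M] (n : ℕ)
    (f : Perm (Fin (2 ^ (n + 1))) → M) :
    ∑ σ ∈ butterflyFinset 2 (n + 1), f σ =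
      ∑ p ∈ butterflyFinset 2 n, ∑ q ∈ butterflyFinset 2 n,
        (f (butterflyStep 2 n 1 ![p, q]) + f (butterflyStep 2 n (finRotate 2) ![p, q])) := by
  have huniv : (Finset.univ : Finset (Perm (Fin 2))) = {1, finRotate 2} := by decide
  have hinj : Function.Injective fun x : (Perm (Fin (2 ^ n)) × Perm (Fin (2 ^ n))) × Perm (Fin 2) =>
      butterflyStep 2 n x.2 ![x.1.1, x.1.2] := by
    rintro ⟨⟨p, q⟩, w⟩ ⟨⟨p', q'⟩, w'⟩ h
    obtain ⟨rfl, hπ⟩ := butterflyStep_injective2 2 n h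
    exact Prod.ext (Prod.ext (congrFun hπ 0) (congrFun hπ 1)) rfl
  rw [butterflyFinset_two_succ, Finset.sum_image hinj.injOn, Finset.sum_product,
    Finset.sum_product, huniv]
  simp [Finset.sum_pair (show (1 : Perm (Fin 2)) ≠ finRotate 2 by decide)]

noncomputable def butterflyCycleMoment (n k : ℕ) : ℝ :=
  ∑ σ ∈ butterflyFinset 2 n, (numCycles σ : ℝ) ^ k

theorem butterflyCycleMoment_succ (n k : ℕ) :
    butterflyCycleMoment (n + 1) k =
      ∑ j ∈ Finset.range (k + 1),
          (k.choose j : ℝ) * butterflyCycleMoment n j * butterflyCycleMoment n (k - j) +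
        butterflyCycleMoment n 0 * butterflyCycleMoment n k := by
  have hmul : ∀ a ∈ butterflyFinset 2 n, ∀ b ∈ butterflyFinset 2 n, a * b ∈ butterflyFinset 2 n :=
    fun a ha b hb => mem_butterflyFinset.2
      (mul_mem_nonsimpleButterfly (mem_butterflyFinset.1 ha) (mem_butterflyFinset.1 hb))
  simp only [butterflyCycleMoment, sum_butterflyFinset_two_succ, numCycles_butterflyStep_one,
    numCycles_butterflyStep_finRotate_two, Fin.sum_univ_two, Matrix.cons_val_zero,
    Matrix.cons_val_one, Matrix.cons_val_fin_one, Nat.cast_add, Finset.sum_add_distrib,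
    Finset.sum_sum_add_pow, pow_zero, Finset.sum_const, nsmul_eq_mul, mul_one]
  congr 1
  rw [Finset.sum_congr rfl fun p hp =>
      Finset.sum_comp_mul_right_of_mul_mem hmul hp fun σ => (numCycles σ : ℝ) ^ k,
    Finset.sum_const, nsmul_eq_mul]

open Polynomial

section ScaleSolve

variable (c : ℝ)

/-- Coefficientwise inverse of `p ↦ p.comp (C c * X) - C c * p`, which multiplies the coefficient
of `X ^ d` by `c ^ d - c`; the linear coefficient is lost (division by zero gives `0`). -/
noncomputable def scaleInv (r : ℝ[X]) : ℝ[X] :=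
  ∑ d ∈ Finset.range (r.natDegree + 1), C (r.coeff d / (c ^ d - c)) * X ^ d

noncomputable def scaleSolve (r : ℝ[X]) : ℝ[X] :=
  C (1 - (scaleInv c r).eval 1) * X + scaleInv c r

theorem coeff_scaleInv (r : ℝ[X]) (d : ℕ) : (scaleInv c r).coeff d = r.coeff d / (c ^ d - c) := by
  simp only [scaleInv, finsetSum_coeff, coeff_C_mul_X_pow, Finset.sum_ite_eq,
    Finset.mem_range, Nat.lt_succ_iff]
  split_ifs with hd
  · rfl
  · rw [coeff_eq_zero_of_natDegree_lt (not_le.1 hd), zero_div]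

theorem coeff_scaleSolve (r : ℝ[X]) {d : ℕ} (hd : d ≠ 1) :
    (scaleSolve c r).coeff d = r.coeff d / (c ^ d - c) := by
  rw [scaleSolve, coeff_add, coeff_C_mul_X, if_neg hd, zero_add, coeff_scaleInv]

theorem eval_one_scaleSolve (r : ℝ[X]) : (scaleSolve c r).eval 1 = 1 := by
  simp [scaleSolve]

theorem scaleSolve_comp_sub {c : ℝ} (hc : ∀ d ≠ 1, c ^ d ≠ c) {r : ℝ[X]} (hr : r.coeff 1 = 0) :
    (scaleSolve c r).comp (C c * X) - C c * scaleSolve c r = r := by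
  ext d
  rw [coeff_sub, comp_C_mul_X_coeff, coeff_C_mul]
  rcases eq_or_ne d 1 with rfl | hd
  · simp [scaleSolve, hr, coeff_scaleInv, mul_comm]
  · rw [coeff_scaleSolve c r hd]
    field_simp [sub_ne_zero.2 (hc d hd)]

end ScaleSolve

noncomputable def momentConv (P : ℕ → ℝ[X]) (k : ℕ) : ℝ[X] :=
  ∑ j ∈ Finset.Ico 1 k, C (k.choose j : ℝ) * P j * P (k - j)

section MomentConv

variable {P : ℕ → ℝ[X]} {k : ℕ}

theorem eval_momentConv (x : ℝ) :
    (momentConv P k).eval x =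
      ∑ j ∈ Finset.Ico 1 k, (k.choose j : ℝ) * (P j).eval x * (P (k - j)).eval x := by
  simp [momentConv, eval_finsetSum]

theorem X_sq_dvd_momentConv (h : ∀ j, 1 ≤ j → j < k → X ∣ P j) : X ^ 2 ∣ momentConv P k :=
  Finset.dvd_sum fun j hj => by
    obtain ⟨hj1, hjk⟩ := Finset.mem_Ico.1 hj
    rw [mul_assoc, pow_two]
    exact dvd_mul_of_dvd_right (mul_dvd_mul (h j hj1 hjk) (h (k - j) (by omega) (by omega))) _

theorem natDegree_momentConv_le (h : ∀ j, 1 ≤ j → j < k → (P j).natDegree ≤ j) :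
    (momentConv P k).natDegree ≤ k :=
  natDegree_sum_le_of_forall_le _ _ fun j hj => by
    obtain ⟨hj1, hjk⟩ := Finset.mem_Ico.1 hj
    calc _ ≤ 0 + j + (k - j) := natDegree_mul_le_of_le (natDegree_mul_le_of_le
            (natDegree_C _).le (h j hj1 hjk)) (h (k - j) (by omega) (by omega))
      _ = k := by omega

theorem coeff_momentConv_pos (hk : 2 ≤ k)
    (h : ∀ j, 1 ≤ j → j < k → (P j).natDegree = j ∧ 0 < (P j).leadingCoeff) :
    0 < (momentConv P k).coeff k := by
  rw [momentConv, finsetSum_coeff]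
  refine Finset.sum_pos (fun j hj => ?_) (Finset.nonempty_Ico.2 (by omega))
  obtain ⟨hj1, hjk⟩ := Finset.mem_Ico.1 hj
  obtain ⟨hdeg, hlc⟩ := h j hj1 hjk
  obtain ⟨hdeg', hlc'⟩ := h (k - j) (by omega) (by omega)
  have hchoose : (0 : ℝ) < k.choose j := by exact_mod_cast Nat.choose_pos hjk.le
  have hcoeff : (P j * P (k - j)).coeff k = (P j).leadingCoeff * (P (k - j)).leadingCoeff := by
    simpa [hdeg, hdeg', Nat.add_sub_cancel' hjk.le] using
      coeff_mul_degree_add_degree (P j) (P (k - j))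
  rw [mul_assoc, coeff_C_mul, hcoeff]
  positivity

end MomentConv

noncomputable def momentPoly (c : ℝ) : ℕ → ℝ[X]
  | 0 => 1
  | 1 => X
  | k + 2 => scaleSolve c (C (c - 1) * ∑ j ∈ (Finset.Ico 1 (k + 2)).attach,
      C ((k + 2).choose j : ℝ) * momentPoly c j * momentPoly c (k + 2 - j))
decreasing_by
  all_goals have := Finset.mem_Ico.1 j.2; omega

section MomentPoly

variable {c : ℝ}

theorem momentPoly_of_two_le (c : ℝ) {k : ℕ} (hk : 2 ≤ k) :
    momentPoly c k = scaleSolve c (C (c - 1) * momentConv (momentPoly c) k) := by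
  obtain ⟨k, rfl⟩ := Nat.exists_eq_add_of_le' hk
  rw [momentPoly, momentConv, Finset.sum_attach _ fun j =>
    C ((k + 2).choose j : ℝ) * momentPoly c j * momentPoly c (k + 2 - j)]

theorem eval_one_momentPoly (c : ℝ) (k : ℕ) : (momentPoly c k).eval 1 = 1 := by
  match k with
  | 0 => simp [momentPoly]
  | 1 => simp [momentPoly]
  | k + 2 => rw [momentPoly_of_two_le c le_add_self, eval_one_scaleSolve]

theorem momentPoly_spec (hc : 1 < c) {k : ℕ} (hk : 1 ≤ k) :
    X ∣ momentPoly c k ∧ (momentPoly c k).natDegree = k ∧ 0 < (momentPoly c k).leadingCoeff := by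
  induction k using Nat.strong_induction_on with
  | _ k ih =>
  rcases hk.eq_or_lt with rfl | hk
  · simp [momentPoly]
  have ih' : ∀ j, 1 ≤ j → j < k → _ := fun j hj1 hjk => ih j hjk hj1
  set q := momentConv (momentPoly c) k
  have hq : X ^ 2 ∣ q := X_sq_dvd_momentConv fun j hj1 hjk => (ih' j hj1 hjk).1
  have hcoeff : ∀ d ≠ 1, (momentPoly c k).coeff d = (c - 1) * q.coeff d / (c ^ d - c) :=
    fun d hd => by rw [momentPoly_of_two_le c hk, coeff_scaleSolve c _ hd, coeff_C_mul]
  have hdeg : (momentPoly c k).natDegree ≤ k :=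
    natDegree_le_iff_coeff_eq_zero.2 fun d hd => by
      rw [hcoeff d (by omega), coeff_eq_zero_of_natDegree_lt
        ((natDegree_momentConv_le fun j hj1 hjk => (ih' j hj1 hjk).2.1.le).trans_lt hd)]
      simp
  have hlead : 0 < (momentPoly c k).coeff k := by
    rw [hcoeff k (by omega)]
    have hck : c < c ^ k := by simpa using pow_lt_pow_right₀ hc (show 1 < k by omega)
    exact div_pos (mul_pos (by linarith) (coeff_momentConv_pos hk fun j hj1 hjk =>
      (ih' j hj1 hjk).2)) (by linarith)
  have hdeg' : (momentPoly c k).natDegree = k :=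
    natDegree_eq_of_le_of_coeff_ne_zero hdeg hlead.ne'
  refine ⟨X_dvd_iff.2 ?_, hdeg', by rwa [leadingCoeff, hdeg']⟩
  rw [hcoeff 0 zero_ne_one, X_pow_dvd_iff.1 hq 0 (by norm_num), mul_zero, zero_div]

theorem momentPoly_comp_sub (hc : 1 < c) {k : ℕ} (hk : 1 ≤ k) :
    (momentPoly c k).comp (C c * X) - C c * momentPoly c k =
      C (c - 1) * momentConv (momentPoly c) k := by
  rcases hk.eq_or_lt with rfl | hk
  · simp [momentPoly, momentConv]
  rw [momentPoly_of_two_le c hk]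
  refine scaleSolve_comp_sub (fun d hd => ?_) ?_
  · simpa using (pow_right_inj₀ (by linarith) hc.ne' (n := 1)).not.2 hd
  rw [coeff_C_mul, X_pow_dvd_iff.1 (X_sq_dvd_momentConv fun j hj1 _ =>
    (momentPoly_spec hc hj1).1) 1 (by norm_num), mul_zero]

end MomentPoly

theorem eval_momentPoly_mul_sub {c : ℝ} (hc : 1 < c) {k : ℕ} (hk : 1 ≤ k) (x : ℝ) :
    (momentPoly c k).eval (c * x) - c * (momentPoly c k).eval x = (c - 1) *
      ∑ j ∈ Finset.Ico 1 k,
        (k.choose j : ℝ) * (momentPoly c j).eval x * (momentPoly c (k - j)).eval x := by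
  simpa [eval_momentConv] using congrArg (eval x) (momentPoly_comp_sub hc hk)

/-- With the terms `j = 0` and `j = k` inside the sum, the functional equation also holds for
`k = 0`. -/
theorem eval_momentPoly_mul {c : ℝ} (hc : 1 < c) (k : ℕ) (x : ℝ) :
    (momentPoly c k).eval (c * x) = (2 - c) * (momentPoly c k).eval x + (c - 1) *
      ∑ j ∈ Finset.range (k + 1),
        (k.choose j : ℝ) * (momentPoly c j).eval x * (momentPoly c (k - j)).eval x := by
  rcases Nat.eq_zero_or_pos k with rfl | hk
  · simp [momentPoly]
    ring
  rw [Finset.range_eq_Ico, Finset.sum_eq_sum_Ico_succ_bot (by omega), Finset.sum_Ico_succ_top hk]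
  have := eval_momentPoly_mul_sub hc hk x
  simp only [Nat.choose_zero_right, Nat.choose_self, Nat.sub_zero, Nat.sub_self, Nat.cast_one,
    momentPoly, eval_one] at this ⊢
  linarith

theorem butterflyCycleMoment_eq (n k : ℕ) :
    butterflyCycleMoment n k = 2 ^ (2 ^ n - 1) * (momentPoly (3 / 2) k).eval ((3 / 2) ^ n) := by
  induction n generalizing k with
  | zero => simp [butterflyCycleMoment, butterflyFinset_zero, numCycles, eval_one_momentPoly]
  | succ n ih =>
    have hpow : (2 : ℝ) ^ (2 ^ (n + 1) - 1) = 2 * (2 ^ (2 ^ n - 1)) ^ 2 := by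
      have : 2 ^ (n + 1) - 1 = 1 + (2 ^ n - 1) * 2 := by
        have := Nat.one_le_two_pow (n := n)
        rw [pow_succ]
        omega
      rw [this, pow_add, pow_one, pow_mul]
    rw [butterflyCycleMoment_succ, pow_succ (3 / 2 : ℝ), mul_comm _ (3 / 2 : ℝ),
      eval_momentPoly_mul (by norm_num), hpow]
    set D : ℝ := 2 ^ (2 ^ n - 1)
    set e : ℕ → ℝ := fun j => (momentPoly (3 / 2) j).eval ((3 / 2) ^ n)
    have hsum : ∑ j ∈ Finset.range (k + 1), (k.choose j : ℝ) * (D * e j) * (D * e (k - j)) =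
        D ^ 2 * ∑ j ∈ Finset.range (k + 1), (k.choose j : ℝ) * e j * e (k - j) := by
      rw [Finset.mul_sum]
      exact Finset.sum_congr rfl fun _ _ => by ring
    have ih' : ∀ j, butterflyCycleMoment n j = D * e j := ih
    have he0 : e 0 = 1 := by simp [e, momentPoly]
    simp only [ih', hsum, he0]
    ring

/-- With `λ = 3/2`, there are polynomials `p_k` with `p₁ = X` and, for `k ≥ 2`:
degree exactly `k`, `p_k(0) = 0`, `p_k(1) = 1`, positive leading coefficient, and
`p_k(λx) − λ·p_k(x) = (λ−1)·Σ_{j=1}^{k−1} C(k,j)·p_j(x)·p_{k−j}(x)`; moreover the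
`k`-th moment of the number of cycles over uniform `B_{2^n}` equals `p_k((3/2)ⁿ)`. -/
theorem nonsimpleButterfly_cycle_moment_polynomials :
    ∃ P : ℕ → Polynomial ℝ,
      P 1 = Polynomial.X ∧
      (∀ k : ℕ, 2 ≤ k →
        (P k).natDegree = k ∧ (P k).coeff 0 = 0 ∧ (P k).eval 1 = 1 ∧
        0 < (P k).leadingCoeff ∧
        ∀ x : ℝ, (P k).eval ((3 / 2) * x) - (3 / 2) * (P k).eval x =
          ((3 : ℝ) / 2 - 1) * ∑ j ∈ Finset.Ico 1 k,
            (k.choose j : ℝ) * (P j).eval x * (P (k - j)).eval x) ∧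
      (∀ n : ℕ, ∀ k : ℕ, 1 ≤ k →
        (1 / (2 : ℝ) ^ (2 ^ n - 1)) *
            ∑ᶠ σ ∈ nonsimpleButterfly 2 n, (numCycles σ : ℝ) ^ k =
          (P k).eval (((3 : ℝ) / 2) ^ n)) := by
  have hc : (1 : ℝ) < 3 / 2 := by norm_num
  refine ⟨momentPoly (3 / 2), by rw [momentPoly], fun k hk => ?_, fun n k _ => ?_⟩
  · obtain ⟨hX, hdeg, hlead⟩ := momentPoly_spec hc (by omega : 1 ≤ k)
    exact ⟨hdeg, X_dvd_iff.1 hX, eval_one_momentPoly _ k, hlead,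
      eval_momentPoly_mul_sub hc (by omega)⟩
  · rw [finsum_mem_eq_finite_toFinset_sum _ (Set.toFinite _)]
    change 1 / (2 : ℝ) ^ (2 ^ n - 1) * butterflyCycleMoment n k = _
    rw [butterflyCycleMoment_eq, one_div, inv_mul_cancel_left₀ (by positivity)]
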